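/- Let X be exponentially distributed with rate 1 and ρ ≥ 1. Then E[log₂(1+ρX)] + log₂(E[1/(1+ρX)]) < 0.48 + log₂(log₂(1+ρ)). -/

import Mathlib

open Real MeasureTheory Set Filter

/-!
For `X ~ Exp(1)`, integration by parts gives `E[log (1 + ρX)] = ρ E[1 / (1 + ρX)]`, and
Jensen's inequality (integrating the tangent line of `log` at `1 + ρ E[X] = 1 + ρ`) gives
`E[log (1 + ρX)] ≤ log (1 + ρ)`. Hence `E[1 / (1 + ρX)] ≤ log (1 + ρ) / ρ`, so the left-hand
side is at most
`log₂ (1 + ρ) + log₂ (log (1 + ρ) / ρ) = log₂ ((1 + ρ) / ρ · log 2) + log₂ log₂ (1 + ρ)`,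
where `(1 + ρ) / ρ ≤ 2` and `log₂ (2 log 2) < 0.48`.
-/

theorem integral_mul_exp_neg_Ioi_zero : ∫ x in Ioi (0 : ℝ), x * exp (-x) = 1 := by
  simpa [mul_comm, Gamma_two, show (2 : ℝ) - 1 = 1 by norm_num] using
    (Gamma_eq_integral two_pos).symm

theorem integrableOn_mul_exp_neg_Ioi_zero :
    IntegrableOn (fun x : ℝ ↦ x * exp (-x)) (Ioi 0) := by
  simpa [mul_comm, show (2 : ℝ) - 1 = 1 by norm_num] using GammaIntegral_convergent two_pos

theorem integrableOn_exp_neg_Ioi_zero : IntegrableOn (fun x : ℝ ↦ exp (-x)) (Ioi 0) := by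
  simpa using exp_neg_integrableOn_Ioi 0 one_pos

section

variable {ρ : ℝ}

theorem log_one_add_mul_mul_exp_neg_le {x : ℝ} (hρ : 0 ≤ ρ) (hx : 0 ≤ x) :
    log (1 + ρ * x) * exp (-x) ≤ ρ * (x * exp (-x)) := by
  rw [← mul_assoc]
  gcongr
  linarith [log_le_sub_one_of_pos (by positivity : 0 < 1 + ρ * x)]

theorem integrableOn_log_one_add_mul_mul_exp_neg (hρ : 0 ≤ ρ) :
    IntegrableOn (fun x ↦ log (1 + ρ * x) * exp (-x)) (Ioi 0) := by
  refine (integrableOn_mul_exp_neg_Ioi_zero.const_mul ρ).mono' (by fun_prop) ?_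
  filter_upwards [ae_restrict_mem measurableSet_Ioi] with x (hx : 0 < x)
  have hlog : 0 ≤ log (1 + ρ * x) := log_nonneg (by nlinarith)
  rw [norm_of_nonneg (by positivity)]
  exact log_one_add_mul_mul_exp_neg_le hρ hx.le

theorem integrableOn_one_div_one_add_mul_mul_exp_neg (hρ : 0 ≤ ρ) :
    IntegrableOn (fun x ↦ 1 / (1 + ρ * x) * exp (-x)) (Ioi 0) := by
  refine integrableOn_exp_neg_Ioi_zero.mono' (by fun_prop) ?_
  filter_upwards [ae_restrict_mem measurableSet_Ioi] with x (hx : 0 < x)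
  have hden : 1 ≤ 1 + ρ * x := by nlinarith
  rw [norm_of_nonneg (by positivity)]
  exact mul_le_of_le_one_left (exp_pos _).le (div_le_one_of_le₀ hden (by positivity))

theorem integral_one_div_one_add_mul_mul_exp_neg_pos (hρ : 0 ≤ ρ) :
    0 < ∫ x in Ioi (0 : ℝ), 1 / (1 + ρ * x) * exp (-x) := by
  have hpos : ∀ x ∈ Ioi (0 : ℝ), 0 < 1 / (1 + ρ * x) * exp (-x) := fun x (hx : 0 < x) ↦ by
    positivity
  rw [setIntegral_pos_iff_support_of_nonneg_ae
    ((ae_restrict_mem measurableSet_Ioi).mono fun x hx ↦ (hpos x hx).le)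
    (integrableOn_one_div_one_add_mul_mul_exp_neg hρ),
    inter_eq_right.mpr fun x hx ↦ Function.mem_support.mpr (hpos x hx).ne']
  simp

theorem tendsto_log_one_add_mul_mul_exp_neg_atTop (hρ : 0 ≤ ρ) :
    Tendsto (fun x ↦ log (1 + ρ * x) * exp (-x)) atTop (nhds 0) := by
  have h := (tendsto_pow_mul_exp_neg_atTop_nhds_zero 1).const_mul ρ
  simp only [pow_one, mul_zero] at h
  refine tendsto_of_tendsto_of_tendsto_of_le_of_le' tendsto_const_nhds h ?_ ?_ <;>
    filter_upwards [eventually_ge_atTop 0] with x hx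
  · exact mul_nonneg (log_nonneg (by nlinarith)) (exp_pos _).le
  · exact log_one_add_mul_mul_exp_neg_le hρ hx

theorem hasDerivAt_neg_log_one_add_mul_mul_exp_neg {x : ℝ} (hx : 0 < 1 + ρ * x) :
    HasDerivAt (fun x ↦ -(log (1 + ρ * x) * exp (-x)))
      (log (1 + ρ * x) * exp (-x) - ρ * (1 / (1 + ρ * x) * exp (-x))) x := by
  have hlog : HasDerivAt (fun x ↦ log (1 + ρ * x)) (ρ / (1 + ρ * x)) x := by
    simpa using (((hasDerivAt_id x).const_mul ρ).const_add 1).log hx.ne'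
  have hexp : HasDerivAt (fun x ↦ exp (-x)) (-exp (-x)) x := by
    simpa using (hasDerivAt_neg x).exp
  exact (hlog.mul hexp).neg.congr_deriv (by ring)

theorem integral_log_one_add_mul_mul_exp_neg (hρ : 0 ≤ ρ) :
    ∫ x in Ioi (0 : ℝ), log (1 + ρ * x) * exp (-x)
      = ρ * ∫ x in Ioi (0 : ℝ), 1 / (1 + ρ * x) * exp (-x) := by
  have hL := integrableOn_log_one_add_mul_mul_exp_neg hρ
  have hB := (integrableOn_one_div_one_add_mul_mul_exp_neg hρ).const_mul ρ
  have h := integral_Ioi_of_hasDerivAt_of_tendsto'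
    (fun x (hx : 0 ≤ x) ↦ hasDerivAt_neg_log_one_add_mul_mul_exp_neg (by positivity))
    (hL.sub hB) (by simpa using (tendsto_log_one_add_mul_mul_exp_neg_atTop hρ).neg)
  rw [integral_sub hL hB, integral_const_mul] at h
  simpa [sub_eq_zero] using h

theorem integral_log_one_add_mul_mul_exp_neg_le (hρ : 0 ≤ ρ) :
    ∫ x in Ioi (0 : ℝ), log (1 + ρ * x) * exp (-x) ≤ log (1 + ρ) := by
  have htangent : ∀ x ∈ Ioi (0 : ℝ),
      log (1 + ρ * x) * exp (-x)
        ≤ (log (1 + ρ) - ρ / (1 + ρ)) * exp (-x) + ρ / (1 + ρ) * (x * exp (-x)) := by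
    intro x (hx : 0 < x)
    have hquot := log_le_sub_one_of_pos (by positivity : 0 < (1 + ρ * x) / (1 + ρ))
    rw [log_div (by positivity) (by positivity),
      show (1 + ρ * x) / (1 + ρ) - 1 = ρ / (1 + ρ) * (x - 1) by field_simp; ring] at hquot
    nlinarith [exp_pos (-x)]
  have hc := integrableOn_mul_exp_neg_Ioi_zero.const_mul (ρ / (1 + ρ))
  have he := integrableOn_exp_neg_Ioi_zero.const_mul (log (1 + ρ) - ρ / (1 + ρ))
  calc ∫ x in Ioi (0 : ℝ), log (1 + ρ * x) * exp (-x)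
      ≤ ∫ x in Ioi (0 : ℝ),
          (log (1 + ρ) - ρ / (1 + ρ)) * exp (-x) + ρ / (1 + ρ) * (x * exp (-x)) :=
        setIntegral_mono_on (integrableOn_log_one_add_mul_mul_exp_neg hρ) (he.add hc)
          measurableSet_Ioi htangent
    _ = log (1 + ρ) := by
        rw [integral_add he hc, integral_const_mul, integral_const_mul, integral_exp_neg_Ioi_zero,
          integral_mul_exp_neg_Ioi_zero]
        ring

end

theorem two_mul_log_two_lt_two_rpow : 2 * log 2 < (2 : ℝ) ^ (0.48 : ℝ) := by
  have h25 : ((2 : ℝ) ^ (0.48 : ℝ)) ^ 25 = 2 ^ 12 := by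
    rw [← rpow_natCast, ← rpow_mul zero_le_two]
    norm_num
  refine lt_of_pow_lt_pow_left₀ 25 (by positivity) ?_
  rw [h25]
  calc (2 * log 2) ^ 25 < (2 * 0.6931471808 : ℝ) ^ 25 := by
        gcongr
        exact log_two_lt_d9
    _ < 2 ^ 12 := by norm_num

theorem logb_two_mul_log_two_lt : logb 2 (2 * log 2) < 0.48 := by
  calc logb 2 (2 * log 2) < logb 2 ((2 : ℝ) ^ (0.48 : ℝ)) :=
        logb_lt_logb one_lt_two (mul_pos two_pos (log_pos one_lt_two)) two_mul_log_two_lt_two_rpow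
    _ = 0.48 := logb_rpow two_pos (by norm_num)

theorem logb_one_add_add_logb_log_one_add_div_lt {ρ : ℝ} (hρ : 1 ≤ ρ) :
    logb 2 (1 + ρ) + logb 2 (log (1 + ρ) / ρ) < 0.48 + logb 2 (logb 2 (1 + ρ)) := by
  have hC : 0 < logb 2 (1 + ρ) := logb_pos one_lt_two (by linarith)
  have hsplit : log (1 + ρ) / ρ = log 2 / ρ * logb 2 (1 + ρ) := by
    rw [logb]; field_simp
  have hfactor : (1 + ρ) * (log 2 / ρ) ≤ 2 * log 2 := by
    rw [mul_div_assoc', div_le_iff₀ (by linarith)]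
    nlinarith [log_pos one_lt_two]
  calc logb 2 (1 + ρ) + logb 2 (log (1 + ρ) / ρ)
      = logb 2 ((1 + ρ) * (log 2 / ρ)) + logb 2 (logb 2 (1 + ρ)) := by
        rw [hsplit, logb_mul (by positivity) hC.ne', logb_mul (by positivity) (by positivity)]
        ring
    _ ≤ logb 2 (2 * log 2) + logb 2 (logb 2 (1 + ρ)) := by
        gcongr
        norm_num
    _ < 0.48 + logb 2 (logb 2 (1 + ρ)) := by
        linarith [logb_two_mul_log_two_lt]

/-- For `X` exponential with rate 1 and `ρ ≥ 1`, the SISO Rayleigh gap satisfies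
`E[log₂(1+ρX)] + log₂ E[1/(1+ρX)] < 0.48 + log₂(log₂(1+ρ))`. -/
theorem rayleigh_gap_bound (ρ : ℝ) (hρ : 1 ≤ ρ) :
    (∫ x in Set.Ioi (0 : ℝ), Real.logb 2 (1 + ρ * x) * Real.exp (-x))
        + Real.logb 2 (∫ x in Set.Ioi (0 : ℝ), (1 / (1 + ρ * x)) * Real.exp (-x))
      < 0.48 + Real.logb 2 (Real.logb 2 (1 + ρ)) := by
  have hρ0 : 0 ≤ ρ := by linarith
  have hjensen := integral_log_one_add_mul_mul_exp_neg_le hρ0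
  have hA : ∫ x in Ioi (0 : ℝ), logb 2 (1 + ρ * x) * exp (-x)
      = (∫ x in Ioi (0 : ℝ), log (1 + ρ * x) * exp (-x)) / log 2 := by
    simp_rw [logb, div_mul_eq_mul_div]
    exact integral_div _ _
  rw [integral_log_one_add_mul_mul_exp_neg hρ0] at hjensen hA
  set B := ∫ x in Ioi (0 : ℝ), 1 / (1 + ρ * x) * exp (-x)
  have hB : B ≤ log (1 + ρ) / ρ := by rwa [le_div_iff₀ (by linarith), mul_comm]
  calc (∫ x in Ioi (0 : ℝ), logb 2 (1 + ρ * x) * exp (-x)) + logb 2 B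
      ≤ logb 2 (1 + ρ) + logb 2 (log (1 + ρ) / ρ) := by
        rw [hA]
        exact add_le_add (div_le_div_of_nonneg_right hjensen (log_pos one_lt_two).le)
          (logb_le_logb_of_le one_lt_two (integral_one_div_one_add_mul_mul_exp_neg_pos hρ0) hB)
    _ < 0.48 + logb 2 (logb 2 (1 + ρ)) := logb_one_add_add_logb_log_one_add_div_lt hρ
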